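/- The large rank of the multiplicative semigroup A^+(B_2) equals 28; equivalently, {(1,2;id), (1,2;(1 2))} is a prime subset of A^+(B_2) of minimum cardinality, and |A^+(B_2)| = 29. -/

import Mathlib

def Bn (n : ℕ) : Type := Option (Fin n × Fin n)

def Bn.mul {n : ℕ} : Bn n → Bn n → Bn n
  | some (i, j), some (k, l) => if j = k then some (i, l) else none
  | _, _ => none

instance (n : ℕ) : Mul (Bn n) := ⟨Bn.mul⟩

instance (n : ℕ) : Semigroup (Bn n) where
  mul_assoc a b c := by
    show Bn.mul (Bn.mul a b) c = Bn.mul a (Bn.mul b c)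
    have e : ∀ i j k l : Fin n, Bn.mul (some (i, j)) (some (k, l)) =
        if j = k then some (i, l) else none := fun _ _ _ _ => rfl
    rcases a with _ | ⟨i, j⟩ <;> rcases b with _ | ⟨k, l⟩ <;> rcases c with _ | ⟨p, q⟩ <;>
      (try rfl) <;> simp only [e] <;> split_ifs <;> first | rfl | (simp_all <;> rfl)

/-- Maps on `Bn n`, composed left-to-right: `x (f * g) = (x f) g`. -/
def MapBn (n : ℕ) : Type := Bn n → Bn n

instance (n : ℕ) : Monoid (MapBn n) where
  mul f g := fun x => g (f x)
  one := fun x => x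
  mul_assoc _ _ _ := rfl
  one_mul _ := rfl
  mul_one _ := rfl

/-- The constant map `ξ_c`. -/
def constMap (n : ℕ) (c : Bn n) : MapBn n := fun _ => c

/-- The `n`-support map `(p, q; σ)`, sending `(i, p) ↦ (iσ, q)` and all else to `θ`. -/
def nSuppMap (n : ℕ) (p q : Fin n) (σ : Equiv.Perm (Fin n)) : MapBn n :=
  fun x =>
    match x with
    | some (i, j) => if j = p then some (σ i, q) else none
    | none => none

instance (n : ℕ) : DecidableEq (Bn n) :=
  inferInstanceAs (DecidableEq (Option (Fin n × Fin n)))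

/-- The singleton-support map `((k,l) → (p,q))`. -/
def sglMap (n : ℕ) (k l p q : Fin n) : MapBn n :=
  fun x => @ite _ (x = some (k, l)) (instDecidableEqBn n x (some (k, l))) (some (p, q)) none

/-- The multiplicative semigroup reduct `A⁺(Bₙ)`, as a set of maps on `Bn n`. -/
def APlus (n : ℕ) : Set (MapBn n) :=
  {f | (∃ c, f = constMap n c) ∨ (∃ p q σ, f = nSuppMap n p q σ) ∨
       (∃ k l p q, f = sglMap n k l p q)}

/-- Independence of a subset of a semigroup. -/
def IndependentIn {S : Type*} [Semigroup S] (U : Set S) : Prop :=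
  ∀ a ∈ U, a ∉ Subsemigroup.closure (U \ {a})

/-!
Every element of `A⁺(B₂)` is a product of two elements of `A⁺(B₂)` other than itself. Hence deleting
one element never shrinks the generated subsemigroup, so every 28-element subset generates, and no
singleton is prime. On the other hand `V = {(1,2;id), (1,2;(1 2))}` is prime, so its 27-element
complement is a subsemigroup and no subset of at most 27 elements generates.
-/

section PrimeSubsets

variable {M : Type*} [Semigroup M] {T : Set M}

def IsPrimeIn (T P : Set M) : Prop :=
  ∀ a ∈ T, ∀ b ∈ T, a * b ∈ P → a ∈ P ∨ b ∈ P

def IsDecomposableByOthers (T : Set M) : Prop :=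
  ∀ w ∈ T, ∃ a ∈ T, ∃ b ∈ T, a * b = w ∧ a ≠ w ∧ b ≠ w

noncomputable def largeRank (T : Set M) : ℕ :=
  sInf {k | ∀ U ⊆ T, U.ncard = k → (Subsemigroup.closure U : Set M) = T}

lemma closure_subset_of_mul_mem (hmul : ∀ a ∈ T, ∀ b ∈ T, a * b ∈ T) {U : Set M} (hU : U ⊆ T) :
    (Subsemigroup.closure U : Set M) ⊆ T :=
  let S : Subsemigroup M := { carrier := T, mul_mem' := fun {a b} ha hb => hmul a ha b hb }
  Subsemigroup.closure_le (S := S) |>.mpr hU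

lemma closure_subset_diff_of_isPrimeIn (hmul : ∀ a ∈ T, ∀ b ∈ T, a * b ∈ T) {P U : Set M}
    (hP : IsPrimeIn T P) (hU : U ⊆ T \ P) : (Subsemigroup.closure U : Set M) ⊆ T \ P :=
  closure_subset_of_mul_mem (T := T \ P)
    (fun a ha b hb => ⟨hmul a ha.1 b hb.1, fun hab => (hP a ha.1 b hb.1 hab).elim ha.2 hb.2⟩) hU

lemma closure_diff_singleton (hmul : ∀ a ∈ T, ∀ b ∈ T, a * b ∈ T)
    (hdecomp : IsDecomposableByOthers T) (w : M) :
    (Subsemigroup.closure (T \ {w}) : Set M) = T := by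
  refine (closure_subset_of_mul_mem hmul Set.sdiff_subset).antisymm fun x hx => ?_
  obtain rfl | hxw := eq_or_ne x w
  · obtain ⟨a, ha, b, hb, rfl, haw, hbw⟩ := hdecomp x hx
    exact mul_mem (Subsemigroup.subset_closure ⟨ha, haw⟩) (Subsemigroup.subset_closure ⟨hb, hbw⟩)
  · exact Subsemigroup.subset_closure ⟨hx, hxw⟩

lemma closure_eq_of_ncard_add_one (hT : T.Finite) (hmul : ∀ a ∈ T, ∀ b ∈ T, a * b ∈ T)
    (hdecomp : IsDecomposableByOthers T) {U : Set M} (hUT : U ⊆ T)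
    (hcard : U.ncard + 1 = T.ncard) : (Subsemigroup.closure U : Set M) = T := by
  obtain ⟨w, hw⟩ : ∃ w, T \ U = {w} := by
    rw [← Set.ncard_eq_one, Set.ncard_sdiff hUT (hT.subset hUT)]
    omega
  rw [← closure_diff_singleton hmul hdecomp w, ← hw, Set.sdiff_sdiff_cancel_left hUT]

lemma largeRank_le (hT : T.Finite) (hne : T.Nonempty) (hmul : ∀ a ∈ T, ∀ b ∈ T, a * b ∈ T)
    (hdecomp : IsDecomposableByOthers T) :
    largeRank T ≤ T.ncard - 1 := by
  have hpos := (Set.ncard_pos hT).mpr hne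
  exact Nat.sInf_le fun U hUT hcard => closure_eq_of_ncard_add_one hT hmul hdecomp hUT (by omega)

lemma ncard_diff_lt_largeRank (hT : T.Finite) (hmul : ∀ a ∈ T, ∀ b ∈ T, a * b ∈ T) {P : Set M}
    (hPT : P ⊆ T) (hPne : P.Nonempty) (hP : IsPrimeIn T P) : (T \ P).ncard < largeRank T := by
  have hTgen : T.ncard ∈ {k | ∀ U ⊆ T, U.ncard = k → (Subsemigroup.closure U : Set M) = T} :=
    fun U hUT hcard => (closure_subset_of_mul_mem hmul hUT).antisymm
      (Set.eq_of_subset_of_ncard_le hUT hcard.ge hT ▸ Subsemigroup.subset_closure)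
  by_contra! hle
  obtain ⟨U, hU, hcard⟩ := Set.exists_subset_card_eq hle
  have hgen := Nat.sInf_mem ⟨_, hTgen⟩ U (hU.trans Set.sdiff_subset) hcard
  obtain ⟨p, hp⟩ := hPne
  exact (closure_subset_diff_of_isPrimeIn hmul hP hU (hgen ▸ hPT hp)).2 hp

lemma one_lt_ncard_of_isPrimeIn (hT : T.Finite)
    (hdecomp : IsDecomposableByOthers T) {W : Set M} (hWT : W ⊆ T)
    (hWne : W.Nonempty) (hW : IsPrimeIn T W) : 1 < W.ncard := by
  obtain ⟨w, hw⟩ := hWne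
  obtain ⟨a, ha, b, hb, rfl, haw, hbw⟩ := hdecomp w (hWT hw)
  rw [Set.one_lt_ncard_iff (hT.subset hWT)]
  rcases hW a ha b hb hw with haW | hbW
  · exact ⟨a, a * b, haW, hw, haw⟩
  · exact ⟨b, a * b, hbW, hw, hbw⟩

end PrimeSubsets

instance (n : ℕ) : Fintype (Bn n) := inferInstanceAs (Fintype (Option (Fin n × Fin n)))

instance (n : ℕ) : DecidableEq (MapBn n) := inferInstanceAs (DecidableEq (Bn n → Bn n))

def aPlusFinset (n : ℕ) : Finset (MapBn n) :=
  Finset.univ.image (constMap n) ∪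
  Finset.univ.image (fun x : Fin n × Fin n × Equiv.Perm (Fin n) => nSuppMap n x.1 x.2.1 x.2.2) ∪
  Finset.univ.image (fun x : (Fin n × Fin n) × Fin n × Fin n => sglMap n x.1.1 x.1.2 x.2.1 x.2.2)

lemma coe_aPlusFinset (n : ℕ) : (aPlusFinset n : Set (MapBn n)) = APlus n := by
  ext f
  simp only [aPlusFinset, APlus, Finset.coe_union, Finset.coe_image, Finset.coe_univ,
    Set.image_univ, Set.mem_union, Set.mem_range, Set.mem_ofPred_eq, Prod.exists, or_assoc]
  simp only [eq_comm]

lemma ncard_aPlus_two : (APlus 2).ncard = 29 := by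
  rw [← coe_aPlusFinset, Set.ncard_coe_finset]
  decide

lemma aPlus_two_mul_mem : ∀ a ∈ APlus 2, ∀ b ∈ APlus 2, a * b ∈ APlus 2 := by
  simp only [← coe_aPlusFinset, Finset.mem_coe]
  decide

lemma isDecomposableByOthers_aPlus_two : IsDecomposableByOthers (APlus 2) := by
  simp only [IsDecomposableByOthers, ← coe_aPlusFinset, Finset.mem_coe]
  decide

lemma isPrimeIn_aPlus_two :
    IsPrimeIn (APlus 2) {nSuppMap 2 0 1 1, nSuppMap 2 0 1 (Equiv.swap 0 1)} := by
  simp only [IsPrimeIn, ← coe_aPlusFinset, Finset.mem_coe, Set.mem_insert_iff,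
    Set.mem_singleton_iff]
  decide

theorem large_rank_APlus_two :
    let V : Set (MapBn 2) := {nSuppMap 2 0 1 1, nSuppMap 2 0 1 (Equiv.swap 0 1)}
    sInf {k | ∀ U : Set (MapBn 2), U ⊆ APlus 2 → U.ncard = k →
        (Subsemigroup.closure U : Set (MapBn 2)) = APlus 2} = 28 ∧
    (V ⊆ APlus 2 ∧ V.Nonempty ∧
      (∀ a ∈ APlus 2, ∀ b ∈ APlus 2, a * b ∈ V → a ∈ V ∨ b ∈ V) ∧
      ∀ W ⊆ APlus 2, W.Nonempty →
        (∀ a ∈ APlus 2, ∀ b ∈ APlus 2, a * b ∈ W → a ∈ W ∨ b ∈ W) →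
        V.ncard ≤ W.ncard) ∧
    (APlus 2).ncard = 29 := by
  intro V
  have hfin : (APlus 2).Finite := coe_aPlusFinset 2 ▸ (aPlusFinset 2).finite_toSet
  have hVT : V ⊆ APlus 2 := by
    simp only [V, ← coe_aPlusFinset, Set.insert_subset_iff, Set.singleton_subset_iff, Finset.mem_coe]
    decide
  have hVne : V.Nonempty := Set.insert_nonempty _ _
  have hVcard : V.ncard = 2 := Set.ncard_pair (by decide)
  have hcompl : (APlus 2 \ V).ncard = 27 := by
    rw [Set.ncard_sdiff hVT, ncard_aPlus_two, hVcard]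
  refine ⟨?_, ⟨hVT, hVne, isPrimeIn_aPlus_two, fun W hWT hWne hW => ?_⟩, ncard_aPlus_two⟩
  · have hlt := ncard_diff_lt_largeRank hfin aPlus_two_mul_mem hVT hVne isPrimeIn_aPlus_two
    have hle := largeRank_le hfin (hVne.mono hVT) aPlus_two_mul_mem
      isDecomposableByOthers_aPlus_two
    rw [ncard_aPlus_two] at hle
    unfold largeRank at hlt hle
    omega
  · have := one_lt_ncard_of_isPrimeIn hfin isDecomposableByOthers_aPlus_two hWT hWne hW
    omega
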